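/- There exists a constant C > 0 such that for all r ≥ 1 and all a ∈ [0,1], the derivative of f_a^±(r) = ∓i ∫_0^∞ e^{-rs}(s² + 1 - a² ∓ 2ais)^{-1/2} ds satisfies |d/dr f_a^±(r)| ≤ C r^{-3/2}. -/

import Mathlib

open MeasureTheory Real

/-- `f_a^±(r) = ∓i ∫_0^∞ e^{-rs}(s² + 1 - a² ∓ 2ais)^{-1/2} ds`, with the principal
branch of the inverse square root; `sgn = 1` gives `f_a^+` and `sgn = -1` gives `f_a^-`. -/
noncomputable def fpm (sgn a r : ℝ) : ℂ :=
  (-(sgn : ℂ)) * Complex.I *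
    ∫ s in Set.Ioi (0 : ℝ),
      Complex.exp (-(r * s : ℝ)) *
        (((s ^ 2 + 1 - a ^ 2 : ℝ) : ℂ) - (sgn : ℂ) * ((2 * a * s : ℝ) : ℂ) * Complex.I) ^
          (-(1 / 2) : ℂ)

section aux

variable {a sgn : ℝ}

/-- the base of the power -/
noncomputable def zb (sgn a : ℝ) (s : ℝ) : ℂ :=
  ((s ^ 2 + 1 - a ^ 2 : ℝ) : ℂ) - (sgn : ℂ) * ((2 * a * s : ℝ) : ℂ) * Complex.I

noncomputable def gb (sgn a : ℝ) (s : ℝ) : ℂ := zb sgn a s ^ (-(1 / 2) : ℂ)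

lemma zb_re (s : ℝ) : (zb sgn a s).re = s ^ 2 + 1 - a ^ 2 := by
  simp [zb, ← Complex.ofReal_pow]

lemma zb_im (s : ℝ) : (zb sgn a s).im = -(sgn * (2 * a * s)) := by
  simp [zb, ← Complex.ofReal_pow]

lemma abs_zb_ge (ha0 : 0 ≤ a) (ha1 : a ≤ 1) (hsgn : sgn = 1 ∨ sgn = -1) {s : ℝ}
    (hs : 0 < s) : s ≤ ‖zb sgn a s‖ := by
  have h2 : s ^ 2 ≤ ‖zb sgn a s‖ ^ 2 := by
    rw [Complex.sq_norm, Complex.normSq_apply, zb_re, zb_im]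
    have hsq : sgn ^ 2 = 1 := by rcases hsgn with h | h <;> simp [h]
    nlinarith [sq_nonneg (s^2 + 1 - a^2), sq_nonneg s, sq_nonneg a, sq_nonneg (a*s),
      sq_nonneg (1 - a^2)]
  exact (pow_le_pow_iff_left₀ hs.le (norm_nonneg _) two_ne_zero).mp h2

lemma zb_ne_zero (ha0 : 0 ≤ a) (ha1 : a ≤ 1) (hsgn : sgn = 1 ∨ sgn = -1) {s : ℝ}
    (hs : 0 < s) : zb sgn a s ≠ 0 := by
  intro h
  have := abs_zb_ge ha0 ha1 hsgn hs
  rw [h] at this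
  simp at this
  linarith

lemma abs_gb_le (ha0 : 0 ≤ a) (ha1 : a ≤ 1) (hsgn : sgn = 1 ∨ sgn = -1) {s : ℝ}
    (hs : 0 < s) : ‖gb sgn a s‖ ≤ s ^ (-(1/2) : ℝ) := by
  rw [gb, Complex.norm_cpow_of_ne_zero (zb_ne_zero ha0 ha1 hsgn hs)]
  simp only [Complex.neg_re, Complex.neg_im, Complex.div_ofNat_im]
  norm_num
  calc ‖zb sgn a s‖ ^ (-(1/2) : ℝ) ≤ s ^ (-(1/2) : ℝ) :=
    Real.rpow_le_rpow_of_nonpos hs (abs_zb_ge ha0 ha1 hsgn hs) (by norm_num)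

lemma continuousOn_gb (ha0 : 0 ≤ a) (ha1 : a ≤ 1) (hsgn : sgn = 1 ∨ sgn = -1) :
    ContinuousOn (gb sgn a) (Set.Ioi 0) := by
  have hz : Continuous (zb sgn a) := by
    unfold zb; fun_prop
  intro s hs
  apply ContinuousAt.continuousWithinAt
  exact (continuousAt_cpow_const (by
    left
    rw [zb_re]
    simp only [Set.mem_Ioi] at hs
    nlinarith)).comp hz.continuousAt

end aux

/-- There is `C > 0` with `|d/dr f_a^±(r)| ≤ C r^{-3/2}` for all `r ≥ 1` and `a ∈ [0, 1]`. -/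
theorem stmt_6 :
    ∃ C > (0 : ℝ), ∀ r : ℝ, 1 ≤ r → ∀ a : ℝ, 0 ≤ a → a ≤ 1 →
      ∀ sgn : ℝ, sgn = 1 ∨ sgn = -1 →
        ‖deriv (fun t : ℝ => fpm sgn a t) r‖ ≤ C * r ^ (-(3 / 2) : ℝ) := by
  refine ⟨Real.Gamma (3/2), by positivity, fun r hr a ha0 ha1 sgn hsgn => ?_⟩
  have hr0 : (0:ℝ) < r := lt_of_lt_of_le one_pos hr
  set μ := volume.restrict (Set.Ioi (0:ℝ)) with hμ
  -- the integrand family and its derivative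
  set F : ℝ → ℝ → ℂ := fun t s => Complex.exp (-(t * s : ℝ)) * gb sgn a s with hF
  set F' : ℝ → ℝ → ℂ := fun t s => (-(s:ℂ)) * (Complex.exp (-(t * s : ℝ)) * gb sgn a s) with hF'
  have hgb_meas : ∀ t : ℝ, AEStronglyMeasurable (F t) μ := by
    intro t
    refine ContinuousOn.aestronglyMeasurable ?_ measurableSet_Ioi
    exact (Continuous.continuousOn (by fun_prop)).mul (continuousOn_gb ha0 ha1 hsgn)
  have hF'_meas : AEStronglyMeasurable (F' r) μ := by
    refine ContinuousOn.aestronglyMeasurable ?_ measurableSet_Ioi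
    exact (Continuous.continuousOn (by fun_prop)).mul
      ((Continuous.continuousOn (by fun_prop)).mul (continuousOn_gb ha0 ha1 hsgn))
  -- norm computations
  have hnormF : ∀ {t : ℝ}, ∀ {s : ℝ}, 0 < s →
      ‖F t s‖ = Real.exp (-(t*s)) * ‖gb sgn a s‖ := by
    intro t s hs
    simp [hF, Complex.norm_exp]
  have hnormF' : ∀ {t : ℝ}, ∀ {s : ℝ}, 0 < s →
      ‖F' t s‖ = s * (Real.exp (-(t*s)) * ‖gb sgn a s‖) := by
    intro t s hs
    simp [hF', Complex.norm_exp, abs_of_pos hs]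
  -- integrability of F r
  have hF_int : Integrable (F r) μ := by
    have hint : IntegrableOn (fun s : ℝ => s ^ (-(1/2):ℝ) * Real.exp (-1 * s)) (Set.Ioi 0) := by
      have := integrableOn_rpow_mul_exp_neg_mul_rpow (p := 1) (s := -(1/2)) (b := 1)
        (by norm_num) one_pos (by norm_num)
      simpa using this
    refine Integrable.mono hint (hgb_meas r) ?_
    filter_upwards [ae_restrict_mem measurableSet_Ioi] with s hs
    have hs' : (0:ℝ) < s := hs
    rw [Real.norm_eq_abs, abs_of_nonneg (by positivity), hnormF hs']
    calc Real.exp (-(r*s)) * ‖gb sgn a s‖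
        ≤ Real.exp (-(1*s)) * (s ^ (-(1/2):ℝ)) := by
          apply mul_le_mul (Real.exp_le_exp.2 (by nlinarith)) (abs_gb_le ha0 ha1 hsgn hs')
            (norm_nonneg _) (Real.exp_nonneg _)
      _ = s ^ (-(1/2):ℝ) * Real.exp (-1 * s) := by rw [mul_comm, neg_mul]
  -- uniform bound for derivative on ball r (1/2)
  have h_bound : ∀ᵐ s ∂μ, ∀ x ∈ Metric.ball r (1/2),
      ‖F' x s‖ ≤ s ^ ((1:ℝ)/2) * Real.exp (-(1/2) * s) := by
    filter_upwards [ae_restrict_mem measurableSet_Ioi] with s hs x hx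
    have hs' : (0:ℝ) < s := hs
    have hx2 : (1/2:ℝ) ≤ x := by
      have := Metric.mem_ball.1 hx
      have := abs_lt.1 (this : |x - r| < 1/2)
      linarith [this.1]
    rw [hnormF' hs']
    have h1 : Real.exp (-(x*s)) ≤ Real.exp (-(1/2)*s) := by
      apply Real.exp_le_exp.2; nlinarith
    calc s * (Real.exp (-(x*s)) * ‖gb sgn a s‖)
        ≤ s * (Real.exp (-(1/2)*s) * s ^ (-(1/2):ℝ)) := by
          apply mul_le_mul_of_nonneg_left _ hs'.le
          exact mul_le_mul h1 (abs_gb_le ha0 ha1 hsgn hs') (norm_nonneg _)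
            (Real.exp_nonneg _)
      _ = s ^ ((1:ℝ)/2) * Real.exp (-(1/2) * s) := by
          rw [show (s : ℝ) * (Real.exp (-(1/2)*s) * s ^ (-(1/2):ℝ))
              = (s ^ (1:ℝ) * s ^ (-(1/2):ℝ)) * Real.exp (-(1/2)*s) by
            rw [Real.rpow_one]; ring]
          rw [← Real.rpow_add hs']
          norm_num
  have bound_int : Integrable (fun s : ℝ => s ^ ((1:ℝ)/2) * Real.exp (-(1/2) * s)) μ := by
    have := integrableOn_rpow_mul_exp_neg_mul_rpow (p := 1) (s := (1:ℝ)/2) (b := 1/2)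
      (by norm_num) one_pos (by norm_num)
    have h' : IntegrableOn (fun s : ℝ => s ^ ((1:ℝ)/2) * Real.exp (-(1/2) * s)) (Set.Ioi 0) := by
      simpa using this
    exact h'
  -- pointwise differentiability
  have h_diff : ∀ᵐ s ∂μ, ∀ x ∈ Metric.ball r (1/2),
      HasDerivAt (fun t => F t s) (F' x s) x := by
    filter_upwards [ae_restrict_mem measurableSet_Ioi] with s hs x hx
    have h1 : HasDerivAt (fun t : ℝ => -(t * s)) (-s) x := by
      exact (hasDerivAt_mul_const s).neg (x := x)
    have h2 : HasDerivAt (fun t : ℝ => ((-(t * s) : ℝ) : ℂ)) ((-s : ℝ) : ℂ) x :=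
      h1.ofReal_comp
    have h3 := (h2.cexp).mul_const (gb sgn a s)
    convert h3 using 1
    · rfl
    · funext t; simp only [hF]; push_cast; ring
    · simp only [hF']; push_cast; ring
  have key := hasDerivAt_integral_of_dominated_loc_of_deriv_le (μ := μ)
    (F := F) (F' := F') (x₀ := r) (bound := fun s => s ^ ((1:ℝ)/2) * Real.exp (-(1/2) * s))
    (Metric.ball_mem_nhds r (by norm_num : (0:ℝ) < 1/2))
    (Filter.Eventually.of_forall hgb_meas) hF_int hF'_meas h_bound bound_int h_diff
  -- identify deriv of fpm
  have hfpm : (fun t : ℝ => fpm sgn a t)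
      = fun t : ℝ => (-(sgn : ℂ)) * Complex.I * ∫ s, F t s ∂μ := by
    funext t
    rfl
  have hDeriv : HasDerivAt (fun t : ℝ => fpm sgn a t)
      ((-(sgn : ℂ)) * Complex.I * ∫ s, F' r s ∂μ) r := by
    rw [hfpm]
    exact (key.2).const_mul _
  rw [hDeriv.deriv]
  rw [norm_mul, norm_mul]
  have habs1 : ‖(-(sgn:ℂ))‖ = 1 := by
    rcases hsgn with h | h <;> simp [h]
  rw [habs1, Complex.norm_I, one_mul, one_mul]
  -- final estimate
  have hle : ‖∫ s, F' r s ∂μ‖ ≤ ∫ s, s ^ ((3/2:ℝ)-1) * Real.exp (-(r * s)) ∂μ := by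
    apply norm_integral_le_of_norm_le
    · have := integrableOn_rpow_mul_exp_neg_mul_rpow (p := 1) (s := (3/2:ℝ)-1) (b := r)
        (by norm_num) one_pos hr0
      have h' : IntegrableOn (fun s : ℝ => s ^ ((3/2:ℝ)-1) * Real.exp (-(r * s))) (Set.Ioi 0) := by
        simpa [neg_mul] using this
      exact h'
    · filter_upwards [ae_restrict_mem measurableSet_Ioi] with s hs
      have hs' : (0:ℝ) < s := hs
      rw [hnormF' hs']
      calc s * (Real.exp (-(r*s)) * ‖gb sgn a s‖)
          ≤ s * (Real.exp (-(r*s)) * s ^ (-(1/2):ℝ)) := by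
            apply mul_le_mul_of_nonneg_left _ hs'.le
            exact mul_le_mul_of_nonneg_left (abs_gb_le ha0 ha1 hsgn hs') (Real.exp_nonneg _)
        _ = s ^ ((3/2:ℝ)-1) * Real.exp (-(r * s)) := by
            rw [show (s : ℝ) * (Real.exp (-(r*s)) * s ^ (-(1/2):ℝ))
                = (s ^ (1:ℝ) * s ^ (-(1/2):ℝ)) * Real.exp (-(r*s)) by
              rw [Real.rpow_one]; ring]
            rw [← Real.rpow_add hs']
            norm_num
  have hval : (∫ s, s ^ ((3/2:ℝ)-1) * Real.exp (-(r * s)) ∂μ)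
      = (1/r) ^ ((3/2):ℝ) * Real.Gamma (3/2) :=
    Real.integral_rpow_mul_exp_neg_mul_Ioi (by norm_num) hr0
  have : ‖∫ s, F' r s ∂μ‖ ≤ (1/r) ^ ((3/2):ℝ) * Real.Gamma (3/2) := by
    rw [← hval]; exact hle
  calc ‖∫ s, F' r s ∂μ‖ ≤ (1/r) ^ ((3/2):ℝ) * Real.Gamma (3/2) := this
    _ = Real.Gamma (3/2) * r ^ (-(3/2):ℝ) := by
        rw [one_div, ← Real.rpow_neg_one r, ← Real.rpow_mul hr0.le]
        norm_num [mul_comm]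
    _ ≤ Real.Gamma (3/2) * r ^ (-(3 / 2) : ℝ) := le_refl _
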